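/- arXiv:2605.12044 — 2 statements merged into one kernel-verified Lean document; each statement's English description precedes it below -/
import Mathlib

section
/- Let (U, V, μ, f) be a finite two-player XOR game and P a behaviour with winning probability ω := ω_G(P) ∈ (0,1). Sample X uniform on {0,1} independently of (u,v) ∼ μ and of (a,b) ∼ P(·,·|u,v), set r := X ⊕ f(u,v) and G := a ⊕ b ⊕ r. Then the mutual information between X and G under the joint distribution satisfies I(X:G) = 1 − h₂(ω). Consequently the ideal quasistatic Szilard feedback value k_B T ln 2 · I(X:G) equals k_B T ln 2 · (1 − h₂(ω_G(P))). -/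
open Finset

/-- Binary entropy `h₂(p) = -p log₂ p - (1-p) log₂ (1-p)`. -/
noncomputable def binEnt (p : ℝ) : ℝ :=
  -p * Real.logb 2 p - (1 - p) * Real.logb 2 (1 - p)

/-- Joint distribution of the physical bit `X = x` and the controller record
`G = a ⊕ b ⊕ (x ⊕ f(u,v)) = g`, where `X` is uniform, `(u,v) ∼ μ`, `(a,b) ∼ P(·,·|u,v)`,
all sampled independently. -/
noncomputable def jointXG {U V : Type*} [Fintype U] [Fintype V]
    (μ : U → V → ℝ) (f : U → V → Bool) (P : U → V → Bool → Bool → ℝ)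
    (x g : Bool) : ℝ :=
  ∑ u : U, ∑ v : V, ∑ a : Bool, ∑ b : Bool,
    (1 / 2 : ℝ) * μ u v * P u v a b *
      (if xor a (xor b (xor x (f u v))) = g then (1 : ℝ) else 0)

/-- Mutual information (in bits) of the induced joint distribution of `(X, G)`. -/
noncomputable def mutualInfoXG {U V : Type*} [Fintype U] [Fintype V]
    (μ : U → V → ℝ) (f : U → V → Bool) (P : U → V → Bool → Bool → ℝ) : ℝ :=
  ∑ x : Bool, ∑ g : Bool,
    jointXG μ f P x g *
      Real.logb 2
        (jointXG μ f P x g /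
          ((∑ g' : Bool, jointXG μ f P x g') * (∑ x' : Bool, jointXG μ f P x' g)))

/-- XOR-game winning probability `ω_G(P)`. -/
noncomputable def gameValue {U V : Type*} [Fintype U] [Fintype V]
    (μ : U → V → ℝ) (f : U → V → Bool) (P : U → V → Bool → Bool → ℝ) : ℝ :=
  ∑ u : U, ∑ v : V, μ u v *
    ∑ a : Bool, ∑ b : Bool, (if xor a b = f u v then (1 : ℝ) else 0) * P u v a b

/-- For a finite two-player XOR game `(U,V,μ,f)` and behaviour `P`
with winning probability `ω := ω_G(P) ∈ (0,1)`, the induced joint distribution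
of `(X, G)` satisfies `I(X:G) = 1 - h₂(ω)`; consequently the ideal quasistatic
Szilard feedback value `k_B T ln 2 · I(X:G)` equals `k_B T ln 2 · (1 - h₂(ω))`. -/
theorem mutual_information_xor_game
    {U V : Type*} [Fintype U] [Fintype V] [Nonempty U] [Nonempty V]
    (μ : U → V → ℝ) (hμ0 : ∀ u v, 0 ≤ μ u v) (hμ1 : ∑ u : U, ∑ v : V, μ u v = 1)
    (f : U → V → Bool)
    (P : U → V → Bool → Bool → ℝ)
    (hP0 : ∀ u v a b, 0 ≤ P u v a b)
    (hP1 : ∀ u v, ∑ a : Bool, ∑ b : Bool, P u v a b = 1)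
    (hω0 : 0 < gameValue μ f P) (hω1 : gameValue μ f P < 1) :
    mutualInfoXG μ f P = 1 - binEnt (gameValue μ f P) ∧
    ∀ kB T : ℝ,
      kB * T * Real.log 2 * mutualInfoXG μ f P
        = kB * T * Real.log 2 * (1 - binEnt (gameValue μ f P)) := by
  have hkey : ∀ x g : Bool, jointXG μ f P x g =
      if x = g then gameValue μ f P / 2 else (1 - gameValue μ f P) / 2 := by
    intro x g
    have inner : ∀ u v, (∑ a : Bool, ∑ b : Bool, P u v a b *
        (if xor a (xor b (xor x (f u v))) = g then (1:ℝ) else 0)) =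
        (if x = g then
          ∑ a : Bool, ∑ b : Bool, (if xor a b = f u v then (1:ℝ) else 0) * P u v a b
        else 1 - ∑ a : Bool, ∑ b : Bool, (if xor a b = f u v then (1:ℝ) else 0) * P u v a b) := by
      intro u v
      have h1 := hP1 u v
      cases x <;> cases g <;> cases hf : f u v <;>
        simp [Fintype.sum_bool, hf] at h1 ⊢ <;> linarith
    have hre : jointXG μ f P x g = ∑ u : U, ∑ v : V, (1/2 : ℝ) * μ u v *
        ∑ a : Bool, ∑ b : Bool, P u v a b *
          (if xor a (xor b (xor x (f u v))) = g then (1:ℝ) else 0) := by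
      unfold jointXG
      refine Finset.sum_congr rfl fun u _ => Finset.sum_congr rfl fun v _ => ?_
      rw [Finset.mul_sum]
      refine Finset.sum_congr rfl fun a _ => ?_
      rw [Finset.mul_sum]
      refine Finset.sum_congr rfl fun b _ => ?_
      ring
    rw [hre]
    simp only [inner]
    by_cases hxg : x = g
    · simp only [hxg, if_pos rfl]
      unfold gameValue
      rw [Finset.sum_div]
      refine Finset.sum_congr rfl fun u _ => ?_
      rw [Finset.sum_div]
      refine Finset.sum_congr rfl fun v _ => ?_
      rw [if_pos trivial]; ring
    · simp only [if_neg hxg]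
      have : (∑ u : U, ∑ v : V, (1/2 : ℝ) * μ u v *
          (1 - ∑ a : Bool, ∑ b : Bool, (if xor a b = f u v then (1:ℝ) else 0) * P u v a b)) =
          (∑ u : U, ∑ v : V, μ u v) / 2 - gameValue μ f P / 2 := by
        unfold gameValue
        rw [Finset.sum_div, Finset.sum_div, ← Finset.sum_sub_distrib]
        refine Finset.sum_congr rfl fun u _ => ?_
        rw [Finset.sum_div, Finset.sum_div, ← Finset.sum_sub_distrib]
        refine Finset.sum_congr rfl fun v _ => ?_
        ring
      rw [this, hμ1]; ring
  set ω := gameValue μ f P with hωdef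
  have hω2 : (0:ℝ) < 1 - ω := by linarith
  have hmargx : ∀ x : Bool, (∑ g' : Bool, jointXG μ f P x g') = 1/2 := by
    intro x; cases x <;> simp [Fintype.sum_bool, hkey] <;> ring
  have hmargg : ∀ g : Bool, (∑ x' : Bool, jointXG μ f P x' g) = 1/2 := by
    intro g; cases g <;> simp [Fintype.sum_bool, hkey] <;> ring
  have hlog1 : Real.logb 2 (ω / 2 / ((1/2 : ℝ) * (1/2))) = 1 + Real.logb 2 ω := by
    have : ω / 2 / ((1/2 : ℝ) * (1/2)) = 2 * ω := by ring
    rw [this, Real.logb_mul (by norm_num) (ne_of_gt hω0), Real.logb_self_eq_one (by norm_num)]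
  have hlog2 : Real.logb 2 ((1 - ω) / 2 / ((1/2 : ℝ) * (1/2))) = 1 + Real.logb 2 (1 - ω) := by
    have : (1 - ω) / 2 / ((1/2 : ℝ) * (1/2)) = 2 * (1 - ω) := by ring
    rw [this, Real.logb_mul (by norm_num) (ne_of_gt hω2), Real.logb_self_eq_one (by norm_num)]
  have ett : jointXG μ f P true true = ω / 2 := by rw [hkey]; simp
  have etf : jointXG μ f P true false = (1 - ω) / 2 := by rw [hkey]; simp
  have eft : jointXG μ f P false true = (1 - ω) / 2 := by rw [hkey]; simp
  have eff : jointXG μ f P false false = ω / 2 := by rw [hkey]; simp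
  have hmain : mutualInfoXG μ f P = 1 - binEnt ω := by
    unfold mutualInfoXG
    simp only [Fintype.sum_bool, ett, etf, eft, eff]
    have hs : ω / 2 + (1 - ω) / 2 = 1 / 2 := by ring
    have hs2 : (1 - ω) / 2 + ω / 2 = 1 / 2 := by ring
    rw [hs, hs2, hlog1, hlog2]
    unfold binEnt
    ring
  exact ⟨hmain, fun kB T => by rw [hmain]⟩
end

section
/- Let N ≥ 2 and consider the 2N parity constraints of the chained Bell game on output assignments x : ℤ/N → {0,1} and y : ℤ/N → {0,1}: the constraints x(j) = y(j) for all j ∈ {0,…,N−1}, x(j+1) = y(j) for j ∈ {0,…,N−2}, and x(0) ≠ y(N−1). Then no assignment satisfies all 2N constraints, every assignment satisfies at most 2N − 1 of them, and some assignment satisfies exactly 2N − 1. Hence the deterministic (local) value of the chained game with uniform distribution over the 2N question pairs is exactly ω_L(G_N) = 1 − 1/(2N). -/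
open Finset

/-- Number of the `2N` chained-game parity constraints satisfied by the deterministic
assignment `(x, y)`: the `N` constraints `x(j) = y(j)`, the `N−1` constraints
`x(j+1) = y(j)` for `j ≠ N−1`, and the wrap-around constraint `x(0) ≠ y(N−1)`. -/
def chainedSat (N : ℕ) [NeZero N] (x y : ZMod N → Bool) : ℕ :=
  (Finset.univ.filter (fun j : ZMod N => x j = y j)).card +
  (Finset.univ.filter (fun j : ZMod N => j ≠ -1 ∧ x (j + 1) = y j)).card +
  (if x 0 ≠ y (-1) then 1 else 0)

lemma neg_one_eq (N : ℕ) [NeZero N] (h1 : 1 ≤ N) : ((N - 1 : ℕ) : ZMod N) = -1 := by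
  push_cast [Nat.cast_sub h1]
  simp [ZMod.natCast_self]

lemma chain_lemma (N : ℕ) [NeZero N] (hN : 2 ≤ N) (x y : ZMod N → Bool)
    (h1 : ∀ j : ZMod N, x j = y j) (h2 : ∀ j : ZMod N, j ≠ -1 → x (j + 1) = y j) :
    x 0 = y (-1) := by
  have key : ∀ k : ℕ, k < N → x 0 = y (k : ZMod N) := by
    intro k
    induction k with
    | zero => intro _; simpa using h1 0
    | succ k ih =>
      intro hk
      have hk' : k < N := Nat.lt_of_succ_lt hk
      have hne : (k : ZMod N) ≠ -1 := by
        intro h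
        rw [← neg_one_eq N (by omega)] at h
        have := congrArg ZMod.val h
        rw [ZMod.val_cast_of_lt hk', ZMod.val_cast_of_lt (by omega)] at this
        omega
      have := h2 (k : ZMod N) hne
      have hx : x ((k : ZMod N) + 1) = y ((k : ZMod N) + 1) := h1 _
      rw [ih hk', ← this, hx]
      push_cast
      ring_nf
  have := key (N - 1) (by omega)
  rwa [neg_one_eq N (by omega)] at this

lemma sat_ne (N : ℕ) [NeZero N] (hN : 2 ≤ N) (x y : ZMod N → Bool) :
    chainedSat N x y ≠ 2 * N := by
  intro h
  unfold chainedSat at h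
  set a := (Finset.univ.filter (fun j : ZMod N => x j = y j)).card with ha
  set b := (Finset.univ.filter (fun j : ZMod N => j ≠ -1 ∧ x (j + 1) = y j)).card with hb
  have haN : a ≤ N := by
    calc a ≤ (Finset.univ : Finset (ZMod N)).card := Finset.card_filter_le _ _
    _ = N := by simp [ZMod.card]
  have hsub : (Finset.univ.filter (fun j : ZMod N => j ≠ -1 ∧ x (j + 1) = y j)) ⊆
      (Finset.univ : Finset (ZMod N)).erase (-1) := by
    intro j hj
    simp only [Finset.mem_filter] at hj
    exact Finset.mem_erase.mpr ⟨hj.2.1, Finset.mem_univ _⟩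
  have hbN : b ≤ N - 1 := by
    calc b ≤ ((Finset.univ : Finset (ZMod N)).erase (-1)).card := Finset.card_le_card hsub
    _ = N - 1 := by rw [Finset.card_erase_of_mem (Finset.mem_univ _)]; simp [ZMod.card]
  have hc : (if x 0 ≠ y (-1) then 1 else 0) ≤ 1 := by split <;> omega
  have haa : a = N := by omega
  have hbb : b = N - 1 := by omega
  have hcc : (if x 0 ≠ y (-1) then 1 else 0) = 1 := by omega
  have h1 : ∀ j : ZMod N, x j = y j := by
    have : (Finset.univ.filter (fun j : ZMod N => x j = y j)) = Finset.univ := by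
      apply Finset.eq_univ_of_card
      rw [← ha, haa]; simp [ZMod.card]
    intro j
    have := this ▸ Finset.mem_univ j
    exact (Finset.mem_filter.mp this).2
  have h2 : ∀ j : ZMod N, j ≠ -1 → x (j + 1) = y j := by
    have heq : (Finset.univ.filter (fun j : ZMod N => j ≠ -1 ∧ x (j + 1) = y j)) =
        (Finset.univ : Finset (ZMod N)).erase (-1) := by
      apply Finset.eq_of_subset_of_card_le hsub
      rw [Finset.card_erase_of_mem (Finset.mem_univ _)]
      rw [← hb, hbb]; simp [ZMod.card]
    intro j hj
    have : j ∈ (Finset.univ : Finset (ZMod N)).erase (-1) :=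
      Finset.mem_erase.mpr ⟨hj, Finset.mem_univ _⟩
    rw [← heq] at this
    exact (Finset.mem_filter.mp this).2.2
  have h3 : x 0 ≠ y (-1) := by by_contra h; simp [h] at hcc
  exact h3 (chain_lemma N hN x y h1 h2)

lemma sat_exists (N : ℕ) [NeZero N] (hN : 2 ≤ N) :
    chainedSat N (fun _ => false) (fun _ => false) = 2 * N - 1 := by
  unfold chainedSat
  simp [ZMod.card]
  have : (Finset.univ.filter (fun j : ZMod N => ¬j = -1)).card = N - 1 := by
    rw [Finset.filter_ne']
    rw [Finset.card_erase_of_mem (Finset.mem_univ _)]; simp [ZMod.card]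
  rw [this]
  omega

/-- For `N ≥ 2`, no assignment satisfies all `2N` chained-game
constraints, every assignment satisfies at most `2N − 1` of them, some assignment
satisfies exactly `2N − 1`, and hence the deterministic (local) value of the chained
game with uniform distribution over the `2N` question pairs is exactly
`ω_L(G_N) = 1 − 1/(2N)`. -/
theorem chained_game_local_value (N : ℕ) [NeZero N] (hN : 2 ≤ N) :
    (∀ x y : ZMod N → Bool, chainedSat N x y ≠ 2 * N) ∧
    (∀ x y : ZMod N → Bool, chainedSat N x y ≤ 2 * N - 1) ∧
    (∃ x y : ZMod N → Bool, chainedSat N x y = 2 * N - 1) ∧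
    IsGreatest {w : ℝ | ∃ x y : ZMod N → Bool, w = (chainedSat N x y : ℝ) / (2 * N)}
      (1 - 1 / (2 * N)) := by
  have hle : ∀ x y : ZMod N → Bool, chainedSat N x y ≤ 2 * N := by
    intro x y
    unfold chainedSat
    have haN : (Finset.univ.filter (fun j : ZMod N => x j = y j)).card ≤ N := by
      calc _ ≤ (Finset.univ : Finset (ZMod N)).card := Finset.card_filter_le _ _
      _ = N := by simp [ZMod.card]
    have hbN : (Finset.univ.filter (fun j : ZMod N => j ≠ -1 ∧ x (j + 1) = y j)).card ≤ N - 1 := by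
      have hsub : (Finset.univ.filter (fun j : ZMod N => j ≠ -1 ∧ x (j + 1) = y j)) ⊆
          (Finset.univ : Finset (ZMod N)).erase (-1) := by
        intro j hj
        simp only [Finset.mem_filter] at hj
        exact Finset.mem_erase.mpr ⟨hj.2.1, Finset.mem_univ _⟩
      calc _ ≤ ((Finset.univ : Finset (ZMod N)).erase (-1)).card := Finset.card_le_card hsub
      _ = N - 1 := by rw [Finset.card_erase_of_mem (Finset.mem_univ _)]; simp [ZMod.card]
    have hc : (if x 0 ≠ y (-1) then 1 else 0) ≤ 1 := by split <;> omega
    omega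
  have hle' : ∀ x y : ZMod N → Bool, chainedSat N x y ≤ 2 * N - 1 := by
    intro x y
    have := sat_ne N hN x y
    have := hle x y
    omega
  refine ⟨sat_ne N hN, hle', ⟨_, _, sat_exists N hN⟩, ?_, ?_⟩
  · refine ⟨fun _ => false, fun _ => false, ?_⟩
    rw [sat_exists N hN]
    have h2N : (0:ℝ) < 2 * N := by positivity
    have : ((2 * N - 1 : ℕ) : ℝ) = 2 * N - 1 := by push_cast [Nat.cast_sub (by omega : 1 ≤ 2*N)]; ring
    rw [this]
    field_simp
  · rintro w ⟨x, y, rfl⟩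
    have h2N : (0:ℝ) < 2 * N := by positivity
    rw [div_le_iff₀ h2N]
    have := hle' x y
    have hcast : (chainedSat N x y : ℝ) ≤ ((2 * N - 1 : ℕ) : ℝ) := by exact_mod_cast this
    have : ((2 * N - 1 : ℕ) : ℝ) = 2 * N - 1 := by push_cast [Nat.cast_sub (by omega : 1 ≤ 2*N)]; ring
    rw [this] at hcast
    calc (chainedSat N x y : ℝ) ≤ 2 * N - 1 := hcast
    _ = (1 - 1 / (2 * ↑N)) * (2 * ↑N) := by field_simp
end
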